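/- The characteristic polynomial of the transport-system matrix factors as det(λ·I − A_T) = (λ − u0)^N · ((λ − u0)² − Σ_{k=1}^N 3·u_k²/(2k+1)) for every real λ. In particular, the eigenvalues of A_T are u0 + sqrt(Σ_{k=1}^N 3·u_k²/(2k+1)), u0 − sqrt(Σ_{k=1}^N 3·u_k²/(2k+1)), and u0 with algebraic multiplicity N. -/

import Mathlib

/-- The quasilinear matrix of the transport subsystem of the SWLME splitting, in the
conserved variables `(h, h·u0, h·u1, ..., h·uN)`.  Rows and columns are indexed by
`0, 1, ..., N+1`. -/
noncomputable def transportMatrix (N : ℕ) (u0 : ℝ) (u : ℕ → ℝ) :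
    Matrix (Fin (N + 2)) (Fin (N + 2)) ℝ :=
  Matrix.of fun i j =>
    if i.val = 0 then
      (if j.val = 1 then 1 else 0)
    else if i.val = 1 then
      (if j.val = 0 then -u0 ^ 2 - ∑ k ∈ Finset.Icc 1 N, (u k) ^ 2 / (2 * (k : ℝ) + 1)
       else if j.val = 1 then 2 * u0
       else 2 * u (j.val - 1) / (2 * ((j.val : ℝ) - 1) + 1))
    else
      (if j.val = 0 then -2 * u0 * u (i.val - 1)
       else if j.val = 1 then 2 * u (i.val - 1)
       else if j = i then u0 else 0)

noncomputable def pcol1 (u0 : ℝ) (u : ℕ → ℝ) (n : ℕ) : ℝ :=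
  if n = 0 then -u0 else if n = 1 then 0 else -2 * u0 * u (n - 1)

noncomputable def pcol2 (u : ℕ → ℝ) (n : ℕ) : ℝ :=
  if n = 0 then 1 else if n = 1 then 0 else 2 * u (n - 1)

noncomputable def qrow0 (N : ℕ) (u0 : ℝ) (u : ℕ → ℝ) (n : ℕ) : ℝ :=
  if n = 0 then -u0 ^ 2 - ∑ k ∈ Finset.Icc 1 N, (u k) ^ 2 / (2 * (k : ℝ) + 1)
  else if n = 1 then u0
  else 2 * u (n - 1) / (2 * ((n : ℝ) - 1) + 1)

noncomputable def Pmat (N : ℕ) (u0 : ℝ) (u : ℕ → ℝ) : Matrix (Fin (N + 2)) (Fin 3) ℝ :=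
  Matrix.of fun i a =>
    if a = 0 then (if i.val = 1 then 1 else 0)
    else if a = 1 then pcol1 u0 u i.val
    else pcol2 u i.val

noncomputable def Qmat (N : ℕ) (u0 : ℝ) (u : ℕ → ℝ) : Matrix (Fin 3) (Fin (N + 2)) ℝ :=
  Matrix.of fun a j =>
    if a = 0 then qrow0 N u0 u j.val
    else if a = 1 then (if j.val = 0 then 1 else 0)
    else (if j.val = 1 then 1 else 0)

lemma sum_split_aux (N : ℕ) (g : ℕ → ℝ) :
    ∑ i : Fin (N + 2), g i.val = g 0 + g 1 + ∑ k ∈ Finset.Icc 1 N, g (k + 1) := by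
  rw [Fin.sum_univ_eq_sum_range, Finset.sum_range_succ', Finset.sum_range_succ']
  rw [show Finset.Icc 1 N = Finset.Ico 1 (N+1) by rfl, Finset.sum_Ico_eq_sum_range]
  simp only [Nat.add_sub_cancel]
  rw [Finset.sum_congr rfl (fun i _ => show g (i+1+1) = g (1+i+1) by ring_nf)]
  ring

lemma decomp (N : ℕ) (u0 : ℝ) (u : ℕ → ℝ) :
    transportMatrix N u0 u = u0 • (1 : Matrix (Fin (N+2)) (Fin (N+2)) ℝ)
      + Pmat N u0 u * Qmat N u0 u := by
  ext i j
  simp only [Matrix.add_apply, Matrix.smul_apply, Matrix.one_apply, Matrix.mul_apply,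
    Fin.sum_univ_three, Pmat, Qmat, transportMatrix, Matrix.of_apply, pcol1, pcol2, qrow0]
  norm_num [-Fin.val_eq_zero_iff]
  have hij : (i = j) ↔ (i.val = j.val) := Fin.ext_iff
  have hji : (j = i) ↔ (j.val = i.val) := Fin.ext_iff
  rcases Nat.lt_or_ge i.val 2 with hi | hi
  · interval_cases h : i.val <;>
    · rcases Nat.lt_or_ge j.val 2 with hj | hj
      · interval_cases h2 : j.val <;> simp_all <;> ring
      · have hj0 : ¬ j.val = 0 := by omega
        have hj1 : ¬ j.val = 1 := by omega
        have : ¬ i.val = j.val := by omega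
        simp_all <;> ring
  · have hi0 : ¬ i.val = 0 := by omega
    have hi1 : ¬ i.val = 1 := by omega
    rcases Nat.lt_or_ge j.val 2 with hj | hj
    · interval_cases h2 : j.val <;> simp_all <;> ring
    · have hj0 : ¬ j.val = 0 := by omega
      have hj1 : ¬ j.val = 1 := by omega
      by_cases he : i = j
      · subst he; simp_all
      · have he2 : ¬ (i:ℕ) = (j:ℕ) := by simpa [Fin.ext_iff] using he
        have he3 : ¬ (j:ℕ) = (i:ℕ) := fun hh => he2 hh.symm
        simp_all


lemma term1 (N : ℕ) (u0 : ℝ) (u : ℕ → ℝ) (k : ℕ) (hk : 1 ≤ k) :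
    qrow0 N u0 u (k+1) * pcol1 u0 u (k+1) = (u k)^2 / (2*(k:ℝ)+1) * (-4*u0) := by
  have h0 : ¬ (k + 1 = 0) := by omega
  have h2 : ¬ (k + 1 = 1) := by omega
  simp only [qrow0, pcol1, h0, h2, if_false, Nat.add_sub_cancel]
  have hne : (2*(k:ℝ)+1) ≠ 0 := by positivity
  push_cast
  rw [show (2*((k:ℝ)+1-1)+1) = 2*(k:ℝ)+1 by ring]
  rw [div_mul_eq_mul_div, div_mul_eq_mul_div, div_eq_div_iff hne hne]
  ring

lemma term2 (u : ℕ → ℝ) (N : ℕ) (u0 : ℝ) (k : ℕ) (hk : 1 ≤ k) :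
    qrow0 N u0 u (k+1) * pcol2 u (k+1) = (u k)^2 / (2*(k:ℝ)+1) * 4 := by
  have h0 : ¬ (k + 1 = 0) := by omega
  have h2 : ¬ (k + 1 = 1) := by omega
  simp only [qrow0, pcol2, h0, h2, if_false, Nat.add_sub_cancel]
  have hne : (2*(k:ℝ)+1) ≠ 0 := by positivity
  push_cast
  rw [show (2*((k:ℝ)+1-1)+1) = 2*(k:ℝ)+1 by ring]
  rw [div_mul_eq_mul_div, div_mul_eq_mul_div, div_eq_div_iff hne hne]
  ring

lemma qp_val (N : ℕ) (u0 : ℝ) (u : ℕ → ℝ) :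
    Qmat N u0 u * Pmat N u0 u =
      !![u0, u0 ^ 3 - 3 * u0 * (∑ k ∈ Finset.Icc 1 N, (u k) ^ 2 / (2 * (k : ℝ) + 1)),
          -u0 ^ 2 + 3 * (∑ k ∈ Finset.Icc 1 N, (u k) ^ 2 / (2 * (k : ℝ) + 1));
         0, -u0, 1; 1, 0, 0] := by
  ext a b
  rw [Matrix.mul_apply]
  fin_cases a <;> fin_cases b <;>
    simp only [Qmat, Pmat, Matrix.of_apply] <;>
    norm_num [Fin.ext_iff, -Fin.val_eq_zero_iff]
  · -- (0,0)
    rw [sum_split_aux N (fun n => if n = 1 then qrow0 N u0 u n else 0),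
      Finset.sum_eq_zero (fun k hk => if_neg (by have := (Finset.mem_Icc.mp hk).1; omega))]
    norm_num [qrow0]
  · -- (0,1)
    rw [sum_split_aux N (fun n => qrow0 N u0 u n * pcol1 u0 u n),
      Finset.sum_congr rfl (fun k hk => term1 N u0 u k (Finset.mem_Icc.mp hk).1),
      ← Finset.sum_mul]
    norm_num [qrow0, pcol1]
    ring
  · -- (0,2)
    rw [sum_split_aux N (fun n => qrow0 N u0 u n * pcol2 u n),
      Finset.sum_congr rfl (fun k hk => term2 u N u0 k (Finset.mem_Icc.mp hk).1),
      ← Finset.sum_mul]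
    norm_num [qrow0, pcol2]
    ring
  · -- (1,0)
    exact Finset.sum_eq_zero (fun x _ => by split_ifs <;> first | rfl | omega)
  · -- (1,1)
    rw [sum_split_aux N (fun n => if n = 0 then pcol1 u0 u n else 0),
      Finset.sum_eq_zero (fun k hk => if_neg (by omega))]
    norm_num [pcol1]
  · -- (1,2)
    rw [sum_split_aux N (fun n => if n = 0 then pcol2 u n else 0),
      Finset.sum_eq_zero (fun k hk => if_neg (by omega))]
    norm_num [pcol2]
  · -- (2,0)
    rw [sum_split_aux N (fun n => if n = 1 then (if n = 1 then (1:ℝ) else 0) else 0),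
      Finset.sum_eq_zero (fun k hk => if_neg (by have := (Finset.mem_Icc.mp hk).1; omega))]
    norm_num
  · -- (2,1)
    rw [sum_split_aux N (fun n => if n = 1 then pcol1 u0 u n else 0),
      Finset.sum_eq_zero (fun k hk => if_neg (by have := (Finset.mem_Icc.mp hk).1; omega))]
    norm_num [pcol1]
  · -- (2,2)
    rw [sum_split_aux N (fun n => if n = 1 then pcol2 u n else 0),
      Finset.sum_eq_zero (fun k hk => if_neg (by have := (Finset.mem_Icc.mp hk).1; omega))]
    norm_num [pcol2]

set_option maxHeartbeats 1000000 in
/-- The characteristic polynomial of the transport-system matrix factors as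
`det(λ·I − A_T) = (λ − u0)^N · ((λ − u0)² − Σ_{k=1}^N 3·u_k²/(2k+1))` for every real
`λ`.  In particular, the eigenvalues of `A_T` are
`u0 ± sqrt(Σ_{k=1}^N 3·u_k²/(2k+1))` and `u0` with algebraic multiplicity `N`. -/
theorem transport_charpoly_factorization (N : ℕ) (hN : 1 ≤ N) (h u0 : ℝ) (u : ℕ → ℝ)
    (lam : ℝ) :
    (lam • (1 : Matrix (Fin (N + 2)) (Fin (N + 2)) ℝ) - transportMatrix N u0 u).det
      = (lam - u0) ^ N *
        ((lam - u0) ^ 2 - ∑ k ∈ Finset.Icc 1 N, 3 * (u k) ^ 2 / (2 * (k : ℝ) + 1)) := by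
  have hRHSsum : ∑ k ∈ Finset.Icc 1 N, 3 * (u k) ^ 2 / (2 * (k : ℝ) + 1)
      = 3 * ∑ k ∈ Finset.Icc 1 N, (u k) ^ 2 / (2 * (k : ℝ) + 1) := by
    rw [Finset.mul_sum]; exact Finset.sum_congr rfl fun k _ => by ring
  set S := ∑ k ∈ Finset.Icc 1 N, (u k) ^ 2 / (2 * (k : ℝ) + 1) with hS
  set x := lam - u0 with hx
  rw [hRHSsum]
  by_cases hx0 : x = 0
  · rw [hx0, zero_pow (by omega : N ≠ 0), zero_mul]
    set M := lam • (1 : Matrix (Fin (N + 2)) (Fin (N + 2)) ℝ) - transportMatrix N u0 u with hM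
    have hlam : lam = u0 := by rw [← sub_eq_zero]; exact hx0
    have h2 : (2:ℕ) < N + 2 := by omega
    set i2 : Fin (N+2) := ⟨2, h2⟩ with hi2
    set i0 : Fin (N+2) := ⟨0, by omega⟩ with hi0
    rw [← Matrix.det_updateRow_add_smul_self M
      (show i2 ≠ i0 by simp [hi2, hi0, Fin.ext_iff]) (-(2 * u 1))]
    apply Matrix.det_eq_zero_of_row_eq_zero i2
    intro j
    rw [Matrix.updateRow_self]
    simp only [Pi.add_apply, Pi.smul_apply, smul_eq_mul, hM, Matrix.sub_apply,
      Matrix.smul_apply, Matrix.one_apply, transportMatrix, Matrix.of_apply, hi2, hi0,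
      smul_eq_mul, hlam]
    norm_num [Fin.ext_iff, -Fin.val_eq_zero_iff]
    split_ifs <;> try ring
    all_goals omega
  · have e1 : lam • (1 : Matrix (Fin (N + 2)) (Fin (N + 2)) ℝ) - transportMatrix N u0 u
        = x • ((1 : Matrix (Fin (N + 2)) (Fin (N + 2)) ℝ)
            + ((-x⁻¹) • Pmat N u0 u) * Qmat N u0 u) := by
      rw [decomp N u0 u, Matrix.smul_mul, smul_add, smul_smul]
      have hc : x * -x⁻¹ = -1 := by field_simp
      rw [hc, neg_one_smul, hx, sub_smul]
      abel
    rw [e1, Matrix.det_smul, Matrix.det_one_add_mul_comm, Matrix.mul_smul, qp_val, ← hS,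
      Matrix.one_fin_three, Fintype.card_fin]
    norm_num [Matrix.det_fin_three, Matrix.add_apply, Matrix.smul_apply, Matrix.cons_val_zero,
      Matrix.cons_val_one, Matrix.head_cons, Matrix.cons_val_two, Matrix.tail_cons,
      Matrix.head_fin_const, Matrix.cons_val', Matrix.empty_val', Matrix.cons_val_fin_one,
      smul_eq_mul]
    rw [pow_add, mul_assoc]
    congr 1
    field_simp
    ring
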